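/- Let B and F be tournaments and let B[F] be the lexicographic substitution tournament with vertex set V(B) × V(F), where (b,f) → (b',f') iff b → b' in B, or b = b' and f → f' in F. Then tr(B[F]) = tr(B) · tr(F). -/

import Mathlib

open Finset

attribute [local instance] Classical.propDecidable

/-- A tournament on vertex set `Fin n`: for every pair of distinct vertices exactly one
direction is present, and no vertex is adjacent to itself. -/
structure Tournament where
  n : ℕ
  adj : Fin n → Fin n → Prop
  asymm : ∀ u v, adj u v → ¬ adj v u
  total : ∀ u v, u ≠ v → adj u v ∨ adj v u

namespace Tournament

/-- `S` is a transitive set: the adjacency relation restricted to `S` is a strict linear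
order (by the tournament axioms this is equivalent to transitivity on `S`). -/
def IsTransitiveSet (T : Tournament) (S : Finset (Fin T.n)) : Prop :=
  ∀ a ∈ S, ∀ b ∈ S, ∀ c ∈ S, T.adj a b → T.adj b c → T.adj a c

/-- `tr T`: the maximum size of a transitive subset of the vertices of `T`. -/
noncomputable def transNum (T : Tournament) : ℕ :=
  sSup {m | ∃ S : Finset (Fin T.n), T.IsTransitiveSet S ∧ S.card = m}

/-- `T` contains an induced copy of `H`. -/
def Contains (T H : Tournament) : Prop :=
  ∃ f : Fin H.n → Fin T.n, Function.Injective f ∧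
    ∀ u v : Fin H.n, H.adj u v ↔ T.adj (f u) (f v)

/-- `T` is `H`-free: no set of vertices of `T` induces a subtournament isomorphic to `H`. -/
def HFree (T H : Tournament) : Prop := ¬ T.Contains H

/-- `S` is a homogeneous set of `T`. -/
def IsHomogeneous (T : Tournament) (S : Finset (Fin T.n)) : Prop :=
  ∀ v, v ∉ S → (∀ s ∈ S, T.adj v s) ∨ (∀ s ∈ S, T.adj s v)

/-- A tournament is prime if it has no nontrivial homogeneous set. -/
def IsPrime (T : Tournament) : Prop :=
  ¬ ∃ S : Finset (Fin T.n), T.IsHomogeneous S ∧ 1 < S.card ∧ S.card < T.n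

/-- The backward-edge graph of `T` under the ordering `σ` (where `σ p` is the vertex in
position `p`): `u` and `v` are joined iff the tournament edge between them goes from the
later position to the earlier one. -/
def backAdj (T : Tournament) (σ : Equiv.Perm (Fin T.n)) (u v : Fin T.n) : Prop :=
  (σ.symm u < σ.symm v ∧ T.adj v u) ∨ (σ.symm v < σ.symm u ∧ T.adj u v)

/-- `σ` is a galaxy ordering of `T` with center assignment `ctr` (mapping each vertex to the
center of its star component, centers and singletons being fixed points): every backward edge
joins a leaf to its center, each star is a left star or a right star, and no center of a star
lies between two leaves of another star. -/
def IsGalaxyOrdering (T : Tournament) (σ : Equiv.Perm (Fin T.n))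
    (ctr : Fin T.n → Fin T.n) : Prop :=
  (∀ v, ctr (ctr v) = ctr v) ∧
  (∀ v, ctr v ≠ v → T.backAdj σ v (ctr v)) ∧
  (∀ u v, T.backAdj σ u v → (ctr u = u ∧ ctr v = u) ∨ (ctr v = v ∧ ctr u = v)) ∧
  (∀ c, ctr c = c →
    (∀ v, ctr v = c → v = c ∨ σ.symm v < σ.symm c) ∨
    (∀ v, ctr v = c → v = c ∨ σ.symm c < σ.symm v)) ∧
  (∀ c, ctr c = c → (∃ v, v ≠ c ∧ ctr v = c) →
    ∀ l₁ l₂, l₁ ≠ ctr l₁ → l₂ ≠ ctr l₂ → ctr l₁ = ctr l₂ → ctr l₁ ≠ c →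
      ¬ (σ.symm l₁ < σ.symm c ∧ σ.symm c < σ.symm l₂))

/-- A tournament is a galaxy if it admits a galaxy ordering. -/
def IsGalaxy (T : Tournament) : Prop := ∃ σ ctr, T.IsGalaxyOrdering σ ctr

/-- A tournament is a star: it has an ordering of its vertices under which the backward-edge
graph is connected and is a star `K_{1,t}` whose center comes before all its leaves or after
all its leaves. -/
def IsStar (T : Tournament) : Prop :=
  ∃ (σ : Equiv.Perm (Fin T.n)) (c : Fin T.n),
    (∀ v, v ≠ c → T.backAdj σ c v) ∧
    (∀ u v, T.backAdj σ u v → u = c ∨ v = c) ∧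
    ((∀ v, v ≠ c → σ.symm c < σ.symm v) ∨ (∀ v, v ≠ c → σ.symm v < σ.symm c))

/-- `P` is a partition of the vertex set of `T` into transitive sets. -/
def IsTransPartition (T : Tournament) (P : Finset (Finset (Fin T.n))) : Prop :=
  (∀ S ∈ P, T.IsTransitiveSet S) ∧ ∀ v : Fin T.n, ∃! S, S ∈ P ∧ v ∈ S

/-- The chromatic number of `T`: the least number of parts in a partition of the vertices of
`T` into transitive sets. -/
noncomputable def chromaticNum (T : Tournament) : ℕ :=
  sInf {m | ∃ P : Finset (Finset (Fin T.n)), T.IsTransPartition P ∧ P.card = m}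

/-- The directed density from `X` to `Y`. -/
noncomputable def density (T : Tournament) (X Y : Finset (Fin T.n)) : ℝ :=
  (((X ×ˢ Y).filter fun p => T.adj p.1 p.2).card : ℝ) / ((X.card : ℝ) * (Y.card : ℝ))

/-- Common part of the definitions of l-sequences and m-sequences: pairwise disjoint
nonempty sets with density at least `1 - lam` forwards. -/
def SeqBase (T : Tournament) (lam : ℝ) (m : ℕ) (S : Fin m → Finset (Fin T.n)) : Prop :=
  (∀ i, (S i).Nonempty) ∧ (∀ i j, i ≠ j → Disjoint (S i) (S j)) ∧
  ∀ i j : Fin m, i < j → 1 - lam ≤ T.density (S i) (S j)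

/-- A `(c, lam)`-l-sequence: every set is `c`-linear. -/
def IsLSeq (T : Tournament) (c lam : ℝ) (m : ℕ) (S : Fin m → Finset (Fin T.n)) : Prop :=
  T.SeqBase lam m S ∧ ∀ i, c * (T.n : ℝ) ≤ ((S i).card : ℝ)

/-- A `(c₁, c₂, lam, eps)`-m-sequence: sets in odd positions (even `0`-based indices) are
`c₂`-linear, sets in even positions are transitive and `(c₁, eps)`-big. -/
def IsMSeq (T : Tournament) (c₁ c₂ lam eps : ℝ) (m : ℕ)
    (S : Fin m → Finset (Fin T.n)) : Prop :=
  T.SeqBase lam m S ∧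
  (∀ i : Fin m, (i : ℕ) % 2 = 0 → c₂ * (T.n : ℝ) ≤ ((S i).card : ℝ)) ∧
  (∀ i : Fin m, (i : ℕ) % 2 = 1 →
    T.IsTransitiveSet (S i) ∧ c₁ * (T.n : ℝ) ^ eps ≤ ((S i).card : ℝ))

/-- A sequence of sets is smooth if the `1 - lam` density condition holds pointwise. -/
def Smooth (T : Tournament) (lam : ℝ) (m : ℕ) (S : Fin m → Finset (Fin T.n)) : Prop :=
  ∀ i j : Fin m, i < j →
    (∀ v ∈ S i, 1 - lam ≤ T.density {v} (S j)) ∧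
    (∀ v ∈ S j, 1 - lam ≤ T.density (S i) {v})

/-- `P` is a partition of the vertex set of `T` into homogeneous sets. -/
def IsHomogeneousPartition (T : Tournament) (P : Finset (Finset (Fin T.n))) : Prop :=
  (∀ A ∈ P, A.Nonempty ∧ T.IsHomogeneous A) ∧ ∀ v : Fin T.n, ∃! A, A ∈ P ∧ v ∈ A

/-- `p T`: the least number of parts of a nontrivial homogeneous partition. -/
noncomputable def partNum (T : Tournament) : ℕ :=
  sInf {m | ∃ P : Finset (Finset (Fin T.n)),
    T.IsHomogeneousPartition P ∧ 1 < P.card ∧ P.card = m}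

/-- `T` is `H`-far: for every nontrivial homogeneous partition `P` of the vertices of `H`,
`T` contains no subtournament isomorphic to the quotient tournament `H_P`. -/
def HFar (T H : Tournament) : Prop :=
  ∀ P : Finset (Finset (Fin H.n)), H.IsHomogeneousPartition P → 1 < P.card →
    ¬ ∃ g : {A // A ∈ P} → Fin T.n, Function.Injective g ∧
        ∀ A B : {A // A ∈ P}, A ≠ B →
          ((∀ a ∈ A.1, ∀ b ∈ B.1, H.adj a b) ↔ T.adj (g A) (g B))

end Tournament

open Tournament

/-!
A transitive set of `B[F]` projects onto a transitive set of `B`, and its part over each vertex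
of that projection projects injectively onto a transitive set of `F`; so it has at most
`tr(B) · tr(F)` elements. Conversely, the product of transitive sets of `B` and `F` is
transitive in `B[F]`.
-/

namespace Tournament

lemma transNum_set_bddAbove (T : Tournament) :
    BddAbove {m | ∃ S : Finset (Fin T.n), T.IsTransitiveSet S ∧ S.card = m} := by
  refine ⟨T.n, ?_⟩
  rintro _ ⟨S, -, rfl⟩
  simpa using S.card_le_univ

lemma IsTransitiveSet.card_le_transNum {T : Tournament} {S : Finset (Fin T.n)}
    (hS : T.IsTransitiveSet S) : #S ≤ T.transNum :=
  le_csSup T.transNum_set_bddAbove ⟨S, hS, rfl⟩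

lemma exists_isTransitiveSet_card_eq_transNum (T : Tournament) :
    ∃ S : Finset (Fin T.n), T.IsTransitiveSet S ∧ S.card = T.transNum := by
  refine Nat.sSup_mem ?_ T.transNum_set_bddAbove
  exact ⟨0, ∅, by simp [IsTransitiveSet], card_empty⟩

lemma IsTransitiveSet.mono {T : Tournament} {S S' : Finset (Fin T.n)}
    (hS : T.IsTransitiveSet S) (h : S' ⊆ S) : T.IsTransitiveSet S' :=
  fun a ha b hb c hc => hS a (h ha) b (h hb) c (h hc)

lemma IsTransitiveSet.image {T H : Tournament} {S : Finset (Fin T.n)}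
    (hS : T.IsTransitiveSet S) (φ : Fin T.n → Fin H.n)
    (h_reflect : ∀ x ∈ S, ∀ y ∈ S, H.adj (φ x) (φ y) → T.adj x y)
    (h_preserve : ∀ x ∈ S, ∀ y ∈ S, T.adj x y → H.adj (φ x) (φ y) ∨ φ x = φ y) :
    H.IsTransitiveSet (S.image φ) := by
  simp only [IsTransitiveSet, mem_image]
  rintro _ ⟨x, hx, rfl⟩ _ ⟨y, hy, rfl⟩ _ ⟨z, hz, rfl⟩ hxy hyz
  have hxz := hS x hx y hy z hz (h_reflect x hx y hy hxy) (h_reflect y hy z hz hyz)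
  refine (h_preserve x hx z hz hxz).resolve_right fun hφ => ?_
  exact H.asymm _ _ hxy (hφ ▸ hyz)

def IsLexProduct (B F G : Tournament) (e : Fin G.n ≃ Fin B.n × Fin F.n) : Prop :=
  ∀ x y : Fin G.n, G.adj x y ↔
    (B.adj (e x).1 (e y).1 ∨ ((e x).1 = (e y).1 ∧ F.adj (e x).2 (e y).2))

namespace IsLexProduct

variable {B F G : Tournament} {e : Fin G.n ≃ Fin B.n × Fin F.n}

lemma isTransitiveSet_image_fst (he : IsLexProduct B F G e) {S : Finset (Fin G.n)}
    (hS : G.IsTransitiveSet S) : B.IsTransitiveSet (S.image fun x => (e x).1) :=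
  hS.image _ (fun x _ y _ h => (he x y).2 (.inl h)) fun x _ y _ h =>
    ((he x y).1 h).imp_right And.left

lemma isTransitiveSet_image_snd_fiber (he : IsLexProduct B F G e) {S : Finset (Fin G.n)}
    (hS : G.IsTransitiveSet S) (b : Fin B.n) :
    F.IsTransitiveSet ({x ∈ S | (e x).1 = b}.image fun x => (e x).2) := by
  have h_fst : ∀ x ∈ {x ∈ S | (e x).1 = b}, ∀ y ∈ {x ∈ S | (e x).1 = b}, (e x).1 = (e y).1 :=
    fun x hx y hy => (mem_filter.1 hx).2.trans (mem_filter.1 hy).2.symm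
  refine (hS.mono (filter_subset _ _)).image _
    (fun x hx y hy h => (he x y).2 (.inr ⟨h_fst x hx y hy, h⟩)) fun x hx y hy h => .inl ?_
  rcases (he x y).1 h with hB | ⟨-, hF⟩
  · exact absurd (h_fst x hx y hy ▸ hB) (fun h => B.asymm _ _ h h)
  · exact hF

lemma card_fiber_le_transNum (he : IsLexProduct B F G e) {S : Finset (Fin G.n)}
    (hS : G.IsTransitiveSet S) (b : Fin B.n) : #{x ∈ S | (e x).1 = b} ≤ F.transNum := by
  have h_inj : Set.InjOn (fun x => (e x).2) ↑{x ∈ S | (e x).1 = b} := fun x hx y hy h =>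
    e.injective (Prod.ext ((mem_filter.1 hx).2.trans (mem_filter.1 hy).2.symm) h)
  rw [← card_image_of_injOn h_inj]
  exact (he.isTransitiveSet_image_snd_fiber hS b).card_le_transNum

lemma card_le_transNum_mul (he : IsLexProduct B F G e) {S : Finset (Fin G.n)}
    (hS : G.IsTransitiveSet S) : #S ≤ B.transNum * F.transNum :=
  calc #S = ∑ b ∈ S.image (fun x => (e x).1), #{x ∈ S | (e x).1 = b} :=
        card_eq_sum_card_image _ _
    _ ≤ ∑ _b ∈ S.image (fun x => (e x).1), F.transNum :=
        sum_le_sum fun b _ => he.card_fiber_le_transNum hS b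
    _ = #(S.image fun x => (e x).1) * F.transNum := by rw [sum_const, smul_eq_mul]
    _ ≤ B.transNum * F.transNum :=
        Nat.mul_le_mul_right _ (he.isTransitiveSet_image_fst hS).card_le_transNum

lemma isTransitiveSet_map_product (he : IsLexProduct B F G e) {SB : Finset (Fin B.n)}
    {SF : Finset (Fin F.n)} (hSB : B.IsTransitiveSet SB) (hSF : F.IsTransitiveSet SF) :
    G.IsTransitiveSet ((SB ×ˢ SF).map e.symm.toEmbedding) := by
  simp only [IsTransitiveSet, mem_map_equiv, Equiv.symm_symm, mem_product]
  rintro x ⟨hxB, hxF⟩ y ⟨hyB, hyF⟩ z ⟨hzB, hzF⟩ hxy hyz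
  rw [he] at hxy hyz ⊢
  rcases hxy with hxy | ⟨hxy, hxy'⟩ <;> rcases hyz with hyz | ⟨hyz, hyz'⟩
  · exact .inl (hSB _ hxB _ hyB _ hzB hxy hyz)
  · exact .inl (hyz ▸ hxy)
  · exact .inl (hxy ▸ hyz)
  · exact .inr ⟨hxy.trans hyz, hSF _ hxF _ hyF _ hzF hxy' hyz'⟩

end IsLexProduct

end Tournament

open Tournament

/-- Let B and F be tournaments and B[F] the lexicographic substitution
tournament on V(B) × V(F), with (b,f) → (b',f') iff b → b' in B, or b = b' and f → f' in F.
Then tr(B[F]) = tr(B)·tr(F). (Formalized for any tournament G isomorphic to B[F].) -/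
theorem stmt17 (B F G : Tournament) (e : Fin G.n ≃ Fin B.n × Fin F.n)
    (he : ∀ x y : Fin G.n, G.adj x y ↔
      (B.adj (e x).1 (e y).1 ∨ ((e x).1 = (e y).1 ∧ F.adj (e x).2 (e y).2))) :
    G.transNum = B.transNum * F.transNum := by
  have hlex : IsLexProduct B F G e := he
  apply le_antisymm
  · obtain ⟨S, hS, hcard⟩ := G.exists_isTransitiveSet_card_eq_transNum
    exact hcard ▸ hlex.card_le_transNum_mul hS
  · obtain ⟨SB, hSB, hcardB⟩ := B.exists_isTransitiveSet_card_eq_transNum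
    obtain ⟨SF, hSF, hcardF⟩ := F.exists_isTransitiveSet_card_eq_transNum
    calc B.transNum * F.transNum = #((SB ×ˢ SF).map e.symm.toEmbedding) := by
          rw [card_map, card_product, hcardB, hcardF]
      _ ≤ G.transNum := (hlex.isTransitiveSet_map_product hSB hSF).card_le_transNum
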